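/- Let ∇ be a metric connection with torsion 3-form T on a Riemannian manifold. Then the first Bianchi identity holds in the form: R(X,Y,Z,V) + R(Y,Z,X,V) + R(Z,X,Y,V) = dT(X,Y,Z,V) - σ^T(X,Y,Z,V) + (∇_V T)(X,Y,Z). -/
import Mathlib


open scoped BigOperators

/-- An abstract model of a Riemannian manifold with a metric connection:
`C` plays the role of the smooth functions, `V` of the vector fields (a module over `C`),
`D X f` is the derivative of the function `f` along `X`, `lie` the Lie bracket,
`g` the metric, `nab` the metric connection with totally skew-symmetric torsion,
`nabg` the Levi-Civita connection, and `frame` a (local orthonormal) frame. -/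
structure SkewTorsionGeometry (n : ℕ) where
  C : Type
  [ringC : CommRing C]
  [algC : Algebra ℝ C]
  V : Type
  [addV : AddCommGroup V]
  [modV : Module C V]
  D : V → C → C
  lie : V → V → V
  g : V → V → C
  nab : V → V → V
  nabg : V → V → V
  frame : Fin n → V

namespace SkewTorsionGeometry

variable {n : ℕ}

instance (S : SkewTorsionGeometry n) : CommRing S.C := S.ringC
instance (S : SkewTorsionGeometry n) : Algebra ℝ S.C := S.algC
instance (S : SkewTorsionGeometry n) : AddCommGroup S.V := S.addV
instance (S : SkewTorsionGeometry n) : Module S.C S.V := S.modV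

variable (S : SkewTorsionGeometry n)

/-- The torsion 3-form `T(X,Y,Z) = g(∇_X Y - ∇_Y X - [X,Y], Z)`. -/
def Tor (X Y Z : S.V) : S.C := S.g (S.nab X Y - S.nab Y X - S.lie X Y) Z

/-- The curvature `R(X,Y,Z,W) = g([∇_X,∇_Y]Z - ∇_{[X,Y]}Z, W)`. -/
def R (X Y Z W : S.V) : S.C :=
  S.g (S.nab X (S.nab Y Z) - S.nab Y (S.nab X Z) - S.nab (S.lie X Y) Z) W

/-- The covariant derivative `(∇_X T)(Y,Z,W)` of the torsion w.r.t. `∇`. -/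
def nabT (X Y Z W : S.V) : S.C :=
  S.D X (S.Tor Y Z W) - S.Tor (S.nab X Y) Z W - S.Tor Y (S.nab X Z) W - S.Tor Y Z (S.nab X W)

/-- The covariant derivative `(∇^g_X T)(Y,Z,W)` of the torsion w.r.t. the Levi-Civita
connection. -/
def nabgT (X Y Z W : S.V) : S.C :=
  S.D X (S.Tor Y Z W) - S.Tor (S.nabg X Y) Z W - S.Tor Y (S.nabg X Z) W - S.Tor Y Z (S.nabg X W)

/-- The exterior derivative `dT` of the torsion 3-form. -/
def dT (X Y Z W : S.V) : S.C :=
  S.D X (S.Tor Y Z W) - S.D Y (S.Tor X Z W) + S.D Z (S.Tor X Y W) - S.D W (S.Tor X Y Z)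
  - S.Tor (S.lie X Y) Z W + S.Tor (S.lie X Z) Y W - S.Tor (S.lie X W) Y Z
  - S.Tor (S.lie Y Z) X W + S.Tor (S.lie Y W) X Z - S.Tor (S.lie Z W) X Y

/-- The wedge product of two 2-forms, evaluated on `(X,Y,Z,W)`. -/
def wedge22 (α β : S.V → S.V → S.C) (X Y Z W : S.V) : S.C :=
  α X Y * β Z W - α X Z * β Y W + α X W * β Y Z
  + α Y Z * β X W - α Y W * β X Z + α Z W * β X Y

/-- The 4-form `σ^T = (1/2) ∑_j (e_j ⌟ T) ∧ (e_j ⌟ T)`. -/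
noncomputable def sigmaT (X Y Z W : S.V) : S.C :=
  (1/2 : ℝ) • ∑ j : Fin n,
    S.wedge22 (fun A B => S.Tor (S.frame j) A B) (fun A B => S.Tor (S.frame j) A B) X Y Z W

/-- The codifferential `δT(X,Y) = -∑_i (∇^g_{e_i} T)(e_i, X, Y)`. -/
def deltaT (X Y : S.V) : S.C := - ∑ i : Fin n, S.nabgT (S.frame i) (S.frame i) X Y

/-- The covariant derivative `(∇_X δT)(Y,Z)` of the 2-form `δT` w.r.t. `∇`. -/
def nabDeltaT (X Y Z : S.V) : S.C :=
  S.D X (S.deltaT Y Z) - S.deltaT (S.nab X Y) Z - S.deltaT Y (S.nab X Z)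

/-- The axioms of the setting: `g` is a symmetric `C`-bilinear metric, `D` acts by
derivations, `lie` is a Lie bracket, `nab` is a metric connection whose torsion is a
3-form, `nabg` is related to `nab` by `∇^g = ∇ - (1/2)T`, and `frame` is a complete
orthonormal frame. -/
structure IsGood : Prop where
  g_symm : ∀ X Y, S.g X Y = S.g Y X
  g_addl : ∀ X Y Z, S.g (X + Y) Z = S.g X Z + S.g Y Z
  g_smull : ∀ (f : S.C) (X Y), S.g (f • X) Y = f * S.g X Y
  D_add : ∀ X f h, S.D X (f + h) = S.D X f + S.D X h
  D_mul : ∀ X f h, S.D X (f * h) = f * S.D X h + h * S.D X f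
  D_const : ∀ X (r : ℝ), S.D X (algebraMap ℝ S.C r) = 0
  lie_skew : ∀ X Y, S.lie X Y = - S.lie Y X
  jacobi : ∀ X Y Z, S.lie (S.lie X Y) Z + S.lie (S.lie Y Z) X + S.lie (S.lie Z X) Y = 0
  nab_addl : ∀ X Y Z, S.nab (X + Y) Z = S.nab X Z + S.nab Y Z
  nab_smull : ∀ (f : S.C) (X Y), S.nab (f • X) Y = f • S.nab X Y
  nab_addr : ∀ X Y Z, S.nab X (Y + Z) = S.nab X Y + S.nab X Z
  nab_leibniz : ∀ X (f : S.C) Y, S.nab X (f • Y) = f • S.nab X Y + (S.D X f) • Y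
  nab_metric : ∀ X Y Z, S.D X (S.g Y Z) = S.g (S.nab X Y) Z + S.g Y (S.nab X Z)
  torsion_skew : ∀ X Y Z, S.Tor X Y Z = - S.Tor X Z Y
  nabg_rel : ∀ X Y Z, S.g (S.nabg X Y) Z = S.g (S.nab X Y) Z - (1/2 : ℝ) • S.Tor X Y Z
  frame_orth : ∀ i j, S.g (S.frame i) (S.frame j) = if i = j then 1 else 0
  frame_complete : ∀ X : S.V, X = ∑ i : Fin n, S.g X (S.frame i) • S.frame i

section Aux

variable (S : SkewTorsionGeometry n)

/-- torsion vector -/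
def tvec (X Y : S.V) : S.V := S.nab X Y - S.nab Y X - S.lie X Y

theorem Tor_eq (X Y Z : S.V) : S.Tor X Y Z = S.g (tvec S X Y) Z := rfl

variable (hS : S.IsGood)
include hS

theorem g_addr (X Y Z : S.V) : S.g X (Y + Z) = S.g X Y + S.g X Z := by
  rw [hS.g_symm, hS.g_addl, hS.g_symm Y X, hS.g_symm Z X]

theorem g_smulr (f : S.C) (X Y : S.V) : S.g X (f • Y) = f * S.g X Y := by
  rw [hS.g_symm, hS.g_smull, hS.g_symm Y X]

theorem g_negl (X Y : S.V) : S.g (-X) Y = -S.g X Y := by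
  rw [← neg_one_smul S.C X, hS.g_smull]; ring

theorem g_negr (X Y : S.V) : S.g X (-Y) = -S.g X Y := by
  rw [hS.g_symm, g_negl S hS, hS.g_symm Y X]

theorem g_subl (X Y Z : S.V) : S.g (X - Y) Z = S.g X Z - S.g Y Z := by
  rw [sub_eq_add_neg, hS.g_addl, g_negl S hS, sub_eq_add_neg]

theorem g_subr (X Y Z : S.V) : S.g X (Y - Z) = S.g X Y - S.g X Z := by
  rw [sub_eq_add_neg, g_addr S hS, g_negr S hS, sub_eq_add_neg]

theorem D_neg_one (X : S.V) : S.D X (-1 : S.C) = 0 := by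
  have h : (-1 : S.C) = algebraMap ℝ S.C (-1) := by simp
  rw [h, hS.D_const]

theorem nab_negr (X Y : S.V) : S.nab X (-Y) = -S.nab X Y := by
  rw [← neg_one_smul S.C Y, hS.nab_leibniz, D_neg_one S hS, zero_smul, add_zero,
    neg_one_smul]

theorem nab_negl (X Y : S.V) : S.nab (-X) Y = -S.nab X Y := by
  rw [← neg_one_smul S.C X, hS.nab_smull, neg_one_smul]

theorem nab_subr (X Y Z : S.V) : S.nab X (Y - Z) = S.nab X Y - S.nab X Z := by
  rw [sub_eq_add_neg, hS.nab_addr, nab_negr S hS, sub_eq_add_neg]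

theorem tvec_swap (X Y : S.V) : tvec S X Y = -tvec S Y X := by
  simp only [tvec, hS.lie_skew X Y]; abel

theorem Tor_swap12 (X Y Z : S.V) : S.Tor X Y Z = -S.Tor Y X Z := by
  rw [Tor_eq, Tor_eq, tvec_swap S hS, g_negl S hS]

theorem Tor_cyc (X Y Z : S.V) : S.Tor X Y Z = S.Tor Y Z X := by
  rw [Tor_swap12 S hS, hS.torsion_skew Y X Z, neg_neg]

theorem Tor_rot (X Y Z : S.V) : S.Tor X Y Z = S.g (tvec S Y Z) X := by
  rw [Tor_cyc S hS, Tor_eq]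

theorem Tor_mid (X Y Z : S.V) : S.Tor X Y Z = -S.g (tvec S X Z) Y := by
  rw [hS.torsion_skew, Tor_eq]

theorem D_Tor (A B C E : S.V) :
    S.D A (S.Tor B C E) = S.g (S.nab A (tvec S B C)) E + S.g (tvec S B C) (S.nab A E) := by
  rw [Tor_eq]; exact hS.nab_metric A (tvec S B C) E

theorem g_sum (u : S.V) (f : Fin n → S.V) :
    S.g u (∑ j, f j) = ∑ j, S.g u (f j) :=
  map_sum (AddMonoidHom.mk' (S.g u) (fun a b => g_addr S hS u a b)) f Finset.univ

theorem g_expand (u v : S.V) :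
    S.g u v = ∑ j, S.g u (S.frame j) * S.g v (S.frame j) := by
  conv_lhs => rw [hS.frame_complete v]
  rw [g_sum S hS]
  refine Finset.sum_congr rfl fun j _ => ?_
  rw [g_smulr S hS, mul_comm]

theorem sigma_eq (X Y Z W : S.V) :
    S.sigmaT X Y Z W =
      S.g (tvec S X Y) (tvec S Z W) - S.g (tvec S X Z) (tvec S Y W)
        + S.g (tvec S Y Z) (tvec S X W) := by
  have step : ∀ j : Fin n,
      S.wedge22 (fun A B => S.Tor (S.frame j) A B) (fun A B => S.Tor (S.frame j) A B) X Y Z W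
        = (S.g (tvec S X Y) (S.frame j) * S.g (tvec S Z W) (S.frame j)
            - S.g (tvec S X Z) (S.frame j) * S.g (tvec S Y W) (S.frame j)
            + S.g (tvec S Y Z) (S.frame j) * S.g (tvec S X W) (S.frame j))
          + (S.g (tvec S X Y) (S.frame j) * S.g (tvec S Z W) (S.frame j)
            - S.g (tvec S X Z) (S.frame j) * S.g (tvec S Y W) (S.frame j)
            + S.g (tvec S Y Z) (S.frame j) * S.g (tvec S X W) (S.frame j)) := by
    intro j
    simp only [wedge22, Tor_rot S hS]
    ring
  unfold sigmaT
  rw [Finset.sum_congr rfl fun j _ => step j, Finset.sum_add_distrib]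
  set T := ∑ j : Fin n, (S.g (tvec S X Y) (S.frame j) * S.g (tvec S Z W) (S.frame j)
            - S.g (tvec S X Z) (S.frame j) * S.g (tvec S Y W) (S.frame j)
            + S.g (tvec S Y Z) (S.frame j) * S.g (tvec S X W) (S.frame j)) with hT
  have h2 : (1/2 : ℝ) • (T + T) = T := by
    rw [← two_smul ℝ T, smul_smul]; norm_num
  rw [h2, hT, Finset.sum_add_distrib, Finset.sum_sub_distrib,
    ← g_expand S hS, ← g_expand S hS, ← g_expand S hS]

theorem g_lie_expand (A B W : S.V) :
    S.g (S.lie A B) W = S.g (S.nab A B) W - S.g (S.nab B A) W - S.g (tvec S B W) A := by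
  have hv : S.lie A B = S.nab A B - S.nab B A - tvec S A B := by simp only [tvec]; abel
  rw [hv, g_subl S hS, g_subl S hS, ← Tor_eq, Tor_cyc S hS, Tor_eq]

end Aux

end SkewTorsionGeometry


/-- the first Bianchi identity with torsion:
`𝔖_{X,Y,Z} R(X,Y,Z,W) = dT(X,Y,Z,W) - σ^T(X,Y,Z,W) + (∇_W T)(X,Y,Z)`. -/
theorem first_bianchi_with_torsion {n : ℕ} (S : SkewTorsionGeometry n)
    (hS : S.IsGood) (X Y Z W : S.V) :
    S.R X Y Z W + S.R Y Z X W + S.R Z X Y W =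
      S.dT X Y Z W - S.sigmaT X Y Z W + S.nabT W X Y Z := by

  classical
  rw [SkewTorsionGeometry.sigma_eq S hS]
  simp only [SkewTorsionGeometry.R, SkewTorsionGeometry.dT, SkewTorsionGeometry.nabT]
  simp only [SkewTorsionGeometry.D_Tor S hS]
  rw [SkewTorsionGeometry.Tor_rot S hS (S.lie X W) Y Z,
    SkewTorsionGeometry.Tor_rot S hS (S.lie Y W) X Z,
    SkewTorsionGeometry.Tor_rot S hS (S.lie Z W) X Y,
    SkewTorsionGeometry.Tor_rot S hS (S.nab W X) Y Z,
    SkewTorsionGeometry.Tor_mid S hS X (S.nab W Y) Z]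
  simp only [SkewTorsionGeometry.Tor_eq, SkewTorsionGeometry.tvec,
    SkewTorsionGeometry.nab_subr S hS, SkewTorsionGeometry.g_subl S hS,
    SkewTorsionGeometry.g_subr S hS]
  have o1 : S.g (S.nab (S.lie Z X) Y) W = -S.g (S.nab (S.lie X Z) Y) W := by
    rw [hS.lie_skew Z X, SkewTorsionGeometry.nab_negl S hS,
      SkewTorsionGeometry.g_negl S hS]
  have j1 : S.g (S.lie (S.lie X Z) Y) W = -S.g (S.lie (S.lie Z X) Y) W := by
    rw [SkewTorsionGeometry.g_lie_expand S hS, SkewTorsionGeometry.g_lie_expand S hS,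
      hS.lie_skew X Z, SkewTorsionGeometry.nab_negl S hS,
      SkewTorsionGeometry.nab_negr S hS]
    simp only [SkewTorsionGeometry.g_negl S hS, SkewTorsionGeometry.g_negr S hS]
    ring
  have j2 : S.g (S.lie (S.lie X Y) Z) W
      = -S.g (S.lie (S.lie Y Z) X) W - S.g (S.lie (S.lie Z X) Y) W := by
    have h2 : S.lie (S.lie X Y) Z + (S.lie (S.lie Y Z) X + S.lie (S.lie Z X) Y) = 0 := by
      rw [← add_assoc]; exact hS.jacobi X Y Z
    have h3 := eq_neg_of_add_eq_zero_left h2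
    rw [h3, SkewTorsionGeometry.g_negl S hS, hS.g_addl]
    ring
  rw [o1, j1, j2]
  ring
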